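/- Let G be a graph in which two complete graphs K_p and K_q (p, q ≥ 3) are glued along a single common vertex. Then nac(G) = 1; that is, G has exactly two NAC-colourings, obtained from each other by swapping colours: one copy entirely red and the other entirely blue. -/

import Mathlib

open scoped Classical

namespace NAC

variable {V : Type*}

/-- Number of edges of `G` in the list `l` whose colour under `c` is `b`. -/
noncomputable def cCount (G : SimpleGraph V) (c : G.edgeSet → Bool) (b : Bool)
    (l : List (Sym2 V)) : ℕ :=
  (l.filter fun e => decide (∃ h : e ∈ G.edgeSet, c ⟨e, h⟩ = b)).length

/-- `c` is a NAC-colouring of `G`: it is surjective (both colours are used) and no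
cycle of `G` contains exactly one edge of either colour. -/
def IsNAC (G : SimpleGraph V) (c : G.edgeSet → Bool) : Prop :=
  Function.Surjective c ∧
  ∀ ⦃u : V⦄ (w : G.Walk u u), w.IsCycle →
    cCount G c true w.edges ≠ 1 ∧ cCount G c false w.edges ≠ 1

/-- The number of NAC-colourings of `G`, divided by two. -/
noncomputable def nacNum (G : SimpleGraph V) : ℕ :=
  {c : G.edgeSet → Bool | IsNAC G c}.ncard / 2

end NAC

namespace NAC

/-- Two complete graphs, on the vertex sets `{none} ∪ inl's` (of size `p + 1`) and
`{none} ∪ inr's` (of size `q + 1`), glued along the single common vertex `none`. -/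
def twoCliques (p q : ℕ) : SimpleGraph (Option (Fin p ⊕ Fin q)) where
  Adj x y :=
    match x, y with
    | none, none => False
    | none, some _ => True
    | some _, none => True
    | some (.inl i), some (.inl j) => i ≠ j
    | some (.inr i), some (.inr j) => i ≠ j
    | some (.inl _), some (.inr _) => False
    | some (.inr _), some (.inl _) => False
  symm := by
    refine ⟨?_⟩
    rintro (_ | (i | i)) (_ | (j | j)) h <;>
      first | trivial | exact Ne.symm h | exact h.elim
  loopless := by
    refine ⟨?_⟩
    rintro (_ | (i | i)) h <;> first | exact h | exact h rfl

/-- Whether an edge of `twoCliques` lies in the first clique. -/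
noncomputable def inFirstClique (p q : ℕ) : Sym2 (Option (Fin p ⊕ Fin q)) → Bool :=
  fun e => decide (∃ i : Fin p, (some (Sum.inl i) : Option (Fin p ⊕ Fin q)) ∈ e)

end NAC

/-! A triangle is a 3-cycle, so a NAC-colouring colours it monochromatically; hence each clique
is monochromatic, and surjectivity forces the two cliques to get different colours. Conversely,
the glueing vertex is a cut vertex, so every cycle stays inside one clique and is therefore
monochromatic under such a colouring. -/

lemma Bool.eq_or_eq_not_of_surjective {α : Type*} {c f : α → Bool}
    (hc : Function.Surjective c) (hcf : ∀ a b, f a = f b → c a = c b) :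
    (∀ a, c a = f a) ∨ (∀ a, c a = !f a) := by
  obtain ⟨a₁, ha₁⟩ := hc true
  obtain ⟨a₀, ha₀⟩ := hc false
  have hne : f a₀ ≠ f a₁ := fun h => by simpa [ha₀, ha₁] using hcf a₀ a₁ h
  have hc_eq : ∀ a, c a = (f a == f a₁) := fun a => by
    by_cases h : f a = f a₁
    · simp [hcf a a₁ h, ha₁, h]
    · have h' : f a = f a₀ := by
        revert h hne; cases f a <;> cases f a₀ <;> cases f a₁ <;> simp
      simp [hcf a a₀ h', ha₀, h]
  cases hfa₁ : f a₁ <;> simp [hc_eq, hfa₁]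

namespace SimpleGraph.Walk

variable {V β : Type*} {G : SimpleGraph V} {f : Sym2 V → β} {v₀ : V}

lemma IsCycle.notMem_dropLast_tail_support {u : V} {w : G.Walk u u} (hw : w.IsCycle) :
    u ∉ w.support.tail.dropLast := by
  have hnodup := hw.nodup_dropLast_support
  rw [← w.cons_tail_support, List.dropLast_cons_of_ne_nil
    (List.ne_nil_of_mem (w.end_mem_tail_support hw.not_nil)), List.nodup_cons] at hnodup
  exact hnodup.1

lemma exists_forall_edges_eq_of_notMem_dropLast_tail_support
    (hf : ∀ ⦃a b d : V⦄, G.Adj a b → G.Adj b d → b ≠ v₀ → f s(a, b) = f s(b, d)) :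
    ∀ {u v : V} (w : G.Walk u v), v₀ ∉ w.support.tail.dropLast →
      ∃ β, ∀ e ∈ w.edges, f e = β := by
  intro u v w
  induction w with
  | nil => exact fun _ => ⟨f s(u, u), by simp⟩
  | @cons a b _ hab t ih =>
    intro hint
    cases t with
    | nil => exact ⟨f s(a, b), by simp⟩
    | @cons _ d _ hbd t =>
      rw [support_cons, List.tail_cons, support_cons,
        List.dropLast_cons_of_ne_nil t.support_ne_nil, List.mem_cons, not_or] at hint
      obtain ⟨β, hβ⟩ := ih (by simpa using hint.2)
      refine ⟨β, fun e he => ?_⟩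
      rw [edges_cons, List.mem_cons] at he
      rcases he with rfl | he
      · rw [hf hab hbd (Ne.symm hint.1)]
        exact hβ _ (by simp)
      · exact hβ e he

lemma IsCycle.exists_forall_edges_eq
    (hf : ∀ ⦃a b d : V⦄, G.Adj a b → G.Adj b d → b ≠ v₀ → f s(a, b) = f s(b, d))
    {u : V} {w : G.Walk u u} (hw : w.IsCycle) : ∃ β, ∀ e ∈ w.edges, f e = β := by
  by_cases hv₀ : v₀ ∈ w.support
  · -- rotated to start at `v₀`, the cycle meets `v₀` only at its ends
    obtain ⟨β, hβ⟩ := exists_forall_edges_eq_of_notMem_dropLast_tail_support hf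
      (w.rotate v₀ hv₀) (hw.rotate hv₀).notMem_dropLast_tail_support
    exact ⟨β, fun e he => hβ e ((w.rotate_edges v₀ hv₀).perm.mem_iff.mpr he)⟩
  · refine exists_forall_edges_eq_of_notMem_dropLast_tail_support hf w fun h => hv₀ ?_
    exact List.mem_of_mem_tail (List.dropLast_subset _ h)

end SimpleGraph.Walk

namespace NAC

section General

variable {V : Type*} {G : SimpleGraph V} {c : G.edgeSet → Bool}

lemma cCount_cons {e : Sym2 V} (he : e ∈ G.edgeSet) (b : Bool) (l : List (Sym2 V)) :
    cCount G c b (e :: l) = (if c ⟨e, he⟩ = b then 1 else 0) + cCount G c b l := by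
  by_cases h : c ⟨e, he⟩ = b <;> simp [cCount, he, h, Nat.add_comm]

lemma cCount_of_forall_eq {β : Bool} {l : List (Sym2 V)}
    (hl : ∀ e ∈ l, ∃ he : e ∈ G.edgeSet, c ⟨e, he⟩ = β) (b : Bool) :
    cCount G c b l = if β = b then l.length else 0 := by
  induction l with
  | nil => simp [cCount]
  | cons e l ih =>
    obtain ⟨he, hce⟩ := hl e List.mem_cons_self
    rw [cCount_cons he, ih fun x hx => hl x (List.mem_cons_of_mem e hx), hce]
    split_ifs <;> simp [Nat.add_comm]

lemma isNAC_of_isCycle_mono (hsurj : Function.Surjective c)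
    (hmono : ∀ ⦃u : V⦄ (w : G.Walk u u), w.IsCycle →
      ∃ β, ∀ e (he : e ∈ w.edges), c ⟨e, w.edges_subset_edgeSet he⟩ = β) :
    IsNAC G c := by
  refine ⟨hsurj, fun u w hw => ?_⟩
  obtain ⟨β, hβ⟩ := hmono w hw
  have hcount := cCount_of_forall_eq (c := c) fun e he => ⟨_, hβ e he⟩
  have h3 : 3 ≤ w.edges.length := w.length_edges ▸ hw.three_le_length
  constructor <;> rw [hcount] <;> split_ifs <;> omega

lemma IsNAC.eq_of_triangle (hc : IsNAC G c) {a b d : V}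
    (hab : G.Adj a b) (hbd : G.Adj b d) (had : G.Adj a d) :
    c ⟨s(a, b), hab⟩ = c ⟨s(a, d), had⟩ := by
  let w : G.Walk a a := .cons hab (.cons hbd (.cons had.symm .nil))
  have hw : w.IsCycle := by
    simp [w, SimpleGraph.Walk.cons_isCycle_iff, hab.ne, hbd.ne, had.ne, had.ne.symm, hab.ne.symm]
  obtain ⟨htrue, hfalse⟩ := hc.2 w hw
  have hswap : c ⟨s(d, a), had.symm⟩ = c ⟨s(a, d), had⟩ := congrArg c (Subtype.ext Sym2.eq_swap)
  simp only [w, SimpleGraph.Walk.edges_cons, SimpleGraph.Walk.edges_nil,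
    cCount_cons (G.mem_edgeSet.mpr hab), cCount_cons (G.mem_edgeSet.mpr hbd),
    cCount_cons (G.mem_edgeSet.mpr had.symm), hswap] at htrue hfalse
  cases hx : c ⟨s(a, b), hab⟩ <;> cases hy : c ⟨s(b, d), hbd⟩ <;> cases hz : c ⟨s(a, d), had⟩ <;>
    simp_all [cCount]

lemma IsNAC.eq_of_isClique (hc : IsNAC G c) {s : Set V} (hs : G.IsClique s)
    (e e' : G.edgeSet) (he : ∀ v ∈ (e : Sym2 V), v ∈ s) (he' : ∀ v ∈ (e' : Sym2 V), v ∈ s) :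
    c e = c e' := by
  have star : ∀ {a b d : V} (hab : G.Adj a b) (had : G.Adj a d), b ∈ s → d ∈ s →
      c ⟨s(a, b), hab⟩ = c ⟨s(a, d), had⟩ := by
    intro a b d hab had hb hd
    by_cases hbd : b = d
    · subst hbd; rfl
    · exact hc.eq_of_triangle hab (hs hb hd hbd) had
  obtain ⟨e, hemem⟩ := e
  obtain ⟨e', he'mem⟩ := e'
  induction e using Sym2.ind with | _ a b => ?_
  induction e' using Sym2.ind with | _ a' b' => ?_
  have hab : G.Adj a b := hemem
  have ha'b' : G.Adj a' b' := he'mem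
  simp only [Sym2.mem_iff, forall_eq_or_imp, forall_eq] at he he'
  by_cases ha : a' = a
  · subst ha; exact star hab ha'b' he.2 he'.2
  · have haa' : G.Adj a a' := hs he.1 he'.1 (Ne.symm ha)
    calc c ⟨s(a, b), hemem⟩ = c ⟨s(a, a'), haa'⟩ := star hab haa' he.2 he'.1
      _ = c ⟨s(a', a), haa'.symm⟩ := congrArg c (Subtype.ext Sym2.eq_swap)
      _ = c ⟨s(a', b'), he'mem⟩ := star haa'.symm ha'b' he.1 he'.2

lemma nacNum_eq_one_of_isNAC_iff {f : G.edgeSet → Bool}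
    (h : ∀ c, IsNAC G c ↔ (∀ e, c e = f e) ∨ (∀ e, c e = !f e)) : nacNum G = 1 := by
  obtain ⟨e, -⟩ := ((h f).2 (Or.inl fun _ => rfl)).1 true
  have hne : f ≠ fun e => !f e := fun hf => Bool.not_ne_self (f e) (congrFun hf e).symm
  have hset : {c | IsNAC G c} = {f, fun e => !f e} := by
    ext c
    simp only [Set.mem_ofPred_eq, Set.mem_insert_iff, Set.mem_singleton_iff, h, funext_iff]
  rw [nacNum, hset, Set.ncard_pair hne]

end General

section TwoCliques

variable {p q : ℕ}

lemma inFirstClique_of_adj_some {a : Option (Fin p ⊕ Fin q)} {y : Fin p ⊕ Fin q}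
    (h : (twoCliques p q).Adj a (some y)) : inFirstClique p q s(a, some y) = y.isLeft := by
  rcases a with _ | (i | i) <;> rcases y with j | j <;> simp_all [inFirstClique, twoCliques]

lemma inFirstClique_eq_of_adj_of_adj ⦃a b d : Option (Fin p ⊕ Fin q)⦄
    (hab : (twoCliques p q).Adj a b) (hbd : (twoCliques p q).Adj b d) (hb : b ≠ none) :
    inFirstClique p q s(a, b) = inFirstClique p q s(b, d) := by
  obtain ⟨y, rfl⟩ := Option.ne_none_iff_exists'.mp hb
  rw [Sym2.eq_swap (a := some y), inFirstClique_of_adj_some hab,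
    inFirstClique_of_adj_some hbd.symm]

lemma isClique_twoCliques (b : Bool) :
    (twoCliques p q).IsClique {v | ∀ x ∈ v, x.isLeft = b} := by
  rintro (_ | (i | i)) hv (_ | (j | j)) hw hne <;> simp_all [twoCliques]

lemma isLeft_eq_inFirstClique {e : Sym2 (Option (Fin p ⊕ Fin q))}
    (he : e ∈ (twoCliques p q).edgeSet) {v : Option (Fin p ⊕ Fin q)} (hv : v ∈ e) :
    ∀ x ∈ v, x.isLeft = inFirstClique p q e := by
  induction e using Sym2.ind with | _ a b => ?_
  rintro x rfl
  rcases Sym2.mem_iff.mp hv with rfl | rfl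
  · rw [Sym2.eq_swap, inFirstClique_of_adj_some (SimpleGraph.Adj.symm he)]
  · rw [inFirstClique_of_adj_some he]

lemma IsNAC.eq_of_inFirstClique_eq {c : (twoCliques p q).edgeSet → Bool}
    (hc : IsNAC (twoCliques p q) c) (e e' : (twoCliques p q).edgeSet)
    (h : inFirstClique p q e = inFirstClique p q e') : c e = c e' :=
  hc.eq_of_isClique (isClique_twoCliques (inFirstClique p q e)) e e'
    (fun _ hv => isLeft_eq_inFirstClique e.2 hv)
    (fun _ hv => h ▸ isLeft_eq_inFirstClique e'.2 hv)

lemma surjective_inFirstClique (hp : 0 < p) (hq : 0 < q) :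
    Function.Surjective fun e : (twoCliques p q).edgeSet => inFirstClique p q e
  | true => ⟨⟨s(none, some (.inl ⟨0, hp⟩)), trivial⟩, inFirstClique_of_adj_some trivial⟩
  | false => ⟨⟨s(none, some (.inr ⟨0, hq⟩)), trivial⟩, inFirstClique_of_adj_some trivial⟩

theorem isNAC_twoCliques_iff (hp : 0 < p) (hq : 0 < q) (c : (twoCliques p q).edgeSet → Bool) :
    IsNAC (twoCliques p q) c ↔
      (∀ e : (twoCliques p q).edgeSet, c e = inFirstClique p q e) ∨
        (∀ e : (twoCliques p q).edgeSet, c e = !inFirstClique p q e) := by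
  refine ⟨fun hc => Bool.eq_or_eq_not_of_surjective hc.1 hc.eq_of_inFirstClique_eq,
    fun h => isNAC_of_isCycle_mono ?_ fun u w hw => ?_⟩
  · have hside := surjective_inFirstClique hp hq
    rcases h with h | h
    · exact funext h ▸ hside
    · exact funext h ▸ Bool.involutive_not.surjective.comp hside
  · obtain ⟨β, hβ⟩ := hw.exists_forall_edges_eq inFirstClique_eq_of_adj_of_adj
    rcases h with h | h
    · exact ⟨β, fun e he => (h _).trans (hβ e he)⟩
    · exact ⟨!β, fun e he => (h _).trans (congrArg _ (hβ e he))⟩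

end TwoCliques

end NAC

open NAC in
/-- If `G` consists of two complete graphs `K_p`, `K_q` (`p, q ≥ 3`) glued along a single
vertex, then `nac(G) = 1`, and the only two NAC-colourings are: one clique entirely red
and the other entirely blue, and its colour swap. -/
theorem statement19 (p q : ℕ) (hp : 3 ≤ p) (hq : 3 ≤ q) :
    nacNum (twoCliques (p - 1) (q - 1)) = 1 ∧
    ∀ c : (twoCliques (p - 1) (q - 1)).edgeSet → Bool,
      IsNAC (twoCliques (p - 1) (q - 1)) c ↔
        ((∀ e : (twoCliques (p - 1) (q - 1)).edgeSet,
            c e = inFirstClique (p - 1) (q - 1) (e : Sym2 _)) ∨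
         (∀ e : (twoCliques (p - 1) (q - 1)).edgeSet,
            c e = !inFirstClique (p - 1) (q - 1) (e : Sym2 _))) := by
  have hiff := isNAC_twoCliques_iff (p := p - 1) (q := q - 1) (by omega) (by omega)
  exact ⟨nacNum_eq_one_of_isNAC_iff hiff, hiff⟩
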